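/- arXiv:1112.2642 — 2 statements merged into one kernel-verified Lean document; each statement's English description precedes it below -/
import Mathlib

section
/- Let p be an odd prime, a ≥ 1, and let P = E^p ⋊ C_p be the semidirect product where E = Z/p^a Z and a cyclic group of order p acts on the direct power E^p by cyclically permuting the coordinates. Then the base subgroup E^p is characteristic in P, i.e., every automorphism of P maps E^p onto itself. -/
/-- The additive automorphism of `(Fin p → ZMod (p^a))` given by cyclically
shifting the coordinates. -/
def shiftAddEquiv (p a : ℕ) [NeZero p] :
    (Fin p → ZMod (p ^ a)) ≃+ (Fin p → ZMod (p ^ a)) :=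
  { Equiv.arrowCongr (Equiv.addRight (1 : Fin p)) (Equiv.refl (ZMod (p ^ a))) with
    map_add' := fun _ _ => rfl }

/-- The cyclic-shift automorphism, viewed as a multiplicative automorphism of the
(multiplicatively written) base group `E^p` with `E = ZMod (p^a)`. -/
def cyclicShift (p a : ℕ) [NeZero p] :
    MulAut (Multiplicative (Fin p → ZMod (p ^ a))) :=
  AddEquiv.toMultiplicative (shiftAddEquiv p a)

/-- The action of the cyclic group generated by the shift automorphism on the base. -/
def shiftAction (p a : ℕ) [NeZero p] :
    (Subgroup.zpowers (cyclicShift p a)) →* MulAut (Multiplicative (Fin p → ZMod (p ^ a))) :=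
  (Subgroup.zpowers (cyclicShift p a)).subtype

/-!
Every element of the base `E^p` centralizes the whole (abelian) base, so its centralizer has
order at least `p^(ap)`. An element `g` outside the base acts on `E^p` by a nontrivial power of the
shift, whose fixed points are the constant vectors; the centralizer meets the base in such fixed
points and has image of order at most `p` in `C_p`, so `|C(g)| ≤ p^(a+1)`. As `p` is odd,
`a + 1 < ap`: the base is the set of elements with centralizer of order at least `p^(ap)`, a set
that every automorphism preserves.
-/

namespace Subgroup
variable {G G' : Type*} [Group G] [Group G']

lemma card_centralizer_singleton_mulEquiv_apply (σ : G ≃* G') (g : G) :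
    Nat.card (centralizer {σ g}) = Nat.card (centralizer {g}) :=
  (Nat.card_congr (σ.toEquiv.subtypeEquiv fun x => by
    simp only [mem_centralizer_singleton_iff, MulEquiv.toEquiv_eq_coe, EquivLike.coe_coe,
      ← map_mul, σ.injective.eq_iff])).symm

lemma characteristic_of_mem_iff_card_centralizer (H : Subgroup G) (P : ℕ → Prop)
    (hH : ∀ g, g ∈ H ↔ P (Nat.card (centralizer {g}))) : H.Characteristic := by
  refine characteristic_iff_comap_eq.mpr fun σ => ?_
  ext g
  rw [mem_comap, MulEquiv.coe_toMonoidHom, hH, hH, card_centralizer_singleton_mulEquiv_apply]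

end Subgroup

open Subgroup

lemma Function.Periodic.eq_apply_zero_of_ne_zero {p : ℕ} [Fact p.Prime] {M : Type*}
    {f : Fin p → M} {c : Fin p} (hf : Function.Periodic f c) (hc : c ≠ 0) (x : Fin p) :
    f x = f 0 := by
  have : Fact (Nat.card (Fin p)).Prime := by simpa
  obtain ⟨n, rfl⟩ : x ∈ AddSubgroup.zmultiples c := by
    rcases (AddSubgroup.zmultiples c).eq_bot_or_eq_top_of_prime_card with h | h
    · exact absurd (h ▸ AddSubgroup.mem_zmultiples c) (by simpa using hc)
    · exact h ▸ AddSubgroup.mem_top x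
  exact hf.zsmul_eq n

namespace SemidirectProduct

instance {N G : Type*} [Group N] [Group G] {φ : G →* MulAut N} [Finite N] [Finite G] :
    Finite (N ⋊[φ] G) :=
  .of_equiv _ equivProd.symm

variable {N G : Type*} [CommGroup N] [Group G] {φ : G →* MulAut N}

lemma inl_mul_eq_mul_inl_iff (n : N) (g : N ⋊[φ] G) :
    inl n * g = g * inl n ↔ φ g.right n = n := by
  constructor
  · intro h
    have := congrArg left h
    simp only [mul_left, left_inl, right_inl, map_one, MulAut.one_apply] at this
    exact mul_left_cancel (this.symm.trans (mul_comm _ _))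
  · intro h
    ext <;> simp [h, mul_comm]

lemma range_inl_le_centralizer {g : N ⋊[φ] G} (hg : g ∈ (inl : N →* N ⋊[φ] G).range) :
    (inl : N →* N ⋊[φ] G).range ≤ centralizer {g} := by
  obtain ⟨m, rfl⟩ := hg
  rintro _ ⟨n, rfl⟩
  rw [mem_centralizer_singleton_iff, ← map_mul, ← map_mul, mul_comm]

lemma card_centralizer_le [Finite G] [Finite N] (g : N ⋊[φ] G) :
    Nat.card (centralizer {g}) ≤ Nat.card G * Nat.card {n : N // φ g.right n = n} := by
  -- The kernel of `f` is `C(g) ∩ N`, which consists of fixed points of `φ g.right`.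
  set f : centralizer {g} →* G := rightHom.comp (centralizer {g}).subtype
  have eq_inl (x : f.ker) : (x : N ⋊[φ] G) = inl (x : N ⋊[φ] G).left := by
    ext
    · rfl
    · exact MonoidHom.mem_ker.mp x.2
  have hker : Nat.card f.ker ≤ Nat.card {n : N // φ g.right n = n} := by
    refine Nat.card_le_card_of_injective (fun x => ⟨(x : N ⋊[φ] G).left, ?_⟩)
      fun x y hxy => ?_
    · rw [← inl_mul_eq_mul_inl_iff, ← eq_inl, ← mem_centralizer_singleton_iff]
      exact x.1.2
    · exact Subtype.ext <| Subtype.ext <| by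
        rw [eq_inl x, eq_inl y]
        exact congrArg (inl ∘ Subtype.val) hxy
  calc Nat.card (centralizer {g}) = Nat.card f.range * Nat.card f.ker := by
        rw [← index_ker, mul_comm, card_mul_index]
    _ ≤ Nat.card G * Nat.card {n : N // φ g.right n = n} :=
        Nat.mul_le_mul (card_le_card_group _) hker

lemma mem_range_inl_iff {g : N ⋊[φ] G} :
    g ∈ (inl : N →* N ⋊[φ] G).range ↔ g.right = 1 := by
  rw [range_inl_eq_ker_rightHom, MonoidHom.mem_ker, rightHom_eq_right]

lemma card_range_inl : Nat.card (inl : N →* N ⋊[φ] G).range = Nat.card N :=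
  (Nat.card_congr (MonoidHom.ofInjective inl_injective).toEquiv).symm

end SemidirectProduct

section CyclicShift
variable {p a : ℕ} [NeZero p]

lemma cyclicShift_apply (x : Multiplicative (Fin p → ZMod (p ^ a))) (i : Fin p) :
    (cyclicShift p a x).toAdd i = x.toAdd (i - 1) :=
  congrArg x.toAdd (sub_eq_add_neg i 1).symm

lemma cyclicShift_zpow_apply (m : ℤ) (x : Multiplicative (Fin p → ZMod (p ^ a)))
    (i : Fin p) :
    ((cyclicShift p a ^ m) x).toAdd i = x.toAdd (i - m • 1) := by
  induction m using Int.induction_on generalizing x i with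
  | zero => simp
  | succ n ih =>
    rw [zpow_add_one, MulAut.mul_apply, ih, cyclicShift_apply, add_smul, one_smul, sub_sub]
  | pred n ih =>
    obtain ⟨y, rfl⟩ := (cyclicShift p a).surjective x
    rw [zpow_sub_one, MulAut.mul_apply, ih, MulAut.inv_apply, MulEquiv.symm_apply_apply,
      cyclicShift_apply, sub_smul, one_smul, sub_sub, sub_add_cancel]

lemma cyclicShift_zpow_eq_one {m : ℤ} (hm : m • (1 : Fin p) = 0) : cyclicShift p a ^ m = 1 := by
  ext x : 1
  exact Multiplicative.toAdd.injective <| funext fun i => by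
    rw [cyclicShift_zpow_apply, hm, sub_zero, MulAut.one_apply]

lemma card_zpowers_cyclicShift_le : Nat.card (zpowers (cyclicShift p a)) ≤ p := by
  rw [Nat.card_zpowers]
  refine orderOf_le_of_pow_eq_one (NeZero.pos p) ?_
  rw [← zpow_natCast]
  refine cyclicShift_zpow_eq_one ?_
  rw [natCast_zsmul]
  simpa using card_nsmul_eq_zero' (G := Fin p) (x := 1)

lemma card_fixed_cyclicShift_zpow_le (hp : p.Prime) {m : ℤ} (hm : cyclicShift p a ^ m ≠ 1) :
    Nat.card {x // (cyclicShift p a ^ m) x = x} ≤ p ^ a := by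
  have : Fact p.Prime := ⟨hp⟩
  have hc : -(m • (1 : Fin p)) ≠ 0 := neg_ne_zero.mpr (mt cyclicShift_zpow_eq_one hm)
  have periodic (x : {x // (cyclicShift p a ^ m) x = x}) :
      Function.Periodic x.1.toAdd (-(m • 1)) := fun i => by
    rw [← sub_eq_add_neg, ← cyclicShift_zpow_apply, x.2]
  refine (Nat.card_le_card_of_injective (fun x => x.1.toAdd 0) fun x y hxy => ?_).trans
    (Nat.card_zmod _).le
  refine Subtype.ext <| Multiplicative.toAdd.injective <| funext fun i => ?_
  rw [(periodic x).eq_apply_zero_of_ne_zero hc, (periodic y).eq_apply_zero_of_ne_zero hc]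
  exact hxy

end CyclicShift

lemma card_centralizer_le_of_right_ne_one {p a : ℕ} [NeZero p] (hp : p.Prime)
    {g : Multiplicative (Fin p → ZMod (p ^ a)) ⋊[shiftAction p a] zpowers (cyclicShift p a)}
    (hg : g.right ≠ 1) : Nat.card (centralizer {g}) ≤ p ^ (a + 1) := by
  obtain ⟨m, hm : cyclicShift p a ^ m = g.right⟩ := g.right.2
  have hm' : cyclicShift p a ^ m ≠ 1 := hm ▸ fun h => hg (Subtype.ext h)
  calc Nat.card (centralizer {g})
      ≤ Nat.card (zpowers (cyclicShift p a)) * Nat.card {x // shiftAction p a g.right x = x} :=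
        SemidirectProduct.card_centralizer_le g
    _ ≤ p * p ^ a := by
        gcongr
        · exact card_zpowers_cyclicShift_le
        · rw [show shiftAction p a g.right = cyclicShift p a ^ m from hm.symm]
          exact card_fixed_cyclicShift_zpow_le hp hm'
    _ = p ^ (a + 1) := by ring

theorem stmt_7 (p a : ℕ) [NeZero p] (hp : p.Prime) (hodd : Odd p) (ha : 1 ≤ a) :
    Subgroup.Characteristic
      ((SemidirectProduct.inl (N := Multiplicative (Fin p → ZMod (p ^ a)))
        (G := Subgroup.zpowers (cyclicShift p a)) (φ := shiftAction p a)).range) := by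
  have hp3 : 3 ≤ p := by
    obtain ⟨k, rfl⟩ := hodd
    have := hp.two_le
    omega
  have hlt : p ^ (a + 1) < (p ^ a) ^ p := by
    rw [← pow_mul]
    exact Nat.pow_lt_pow_right hp.one_lt (by nlinarith)
  refine characteristic_of_mem_iff_card_centralizer _ ((p ^ a) ^ p ≤ ·) fun g =>
    ⟨fun hg => ?_, ?_⟩
  · calc (p ^ a) ^ p = Nat.card (SemidirectProduct.inl.range) := by
          rw [SemidirectProduct.card_range_inl, Nat.card_congr Multiplicative.toAdd,
            Nat.card_fun, Nat.card_zmod, Nat.card_fin]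
      _ ≤ Nat.card (centralizer {g}) :=
          card_le_of_le (SemidirectProduct.range_inl_le_centralizer hg)
  · contrapose!
    rw [SemidirectProduct.mem_range_inl_iff]
    exact fun hg => (card_centralizer_le_of_right_ne_one hp hg).trans_lt hlt
end

section
/- Let N be a normal subgroup of a finite group G with G/N abelian, and let χ be a G-invariant complex irreducible character of N that extends to an irreducible character χ̃ of G. Then the map θ ↦ θ·χ̃ is a bijection from the set of linear characters of G that are trivial on N onto the set of irreducible characters of G whose restriction to N contains χ; in particular there are exactly |G/N| such characters and they are pairwise distinct. -/
/-!
Gallagher's argument, with the characters of the abelian group `G/N` doing the work of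
Frobenius reciprocity. Twisting by a linear character is an autoequivalence of `FDRep`, so
every `θχ̃` is irreducible. Summed over the characters `θ` of `G/N`, the twists `θχ̃` add up to
`|G/N|` times `χ̃` extended by zero off `N` (the character induced from `χ`). Orthogonality then
gives `∑_{n ∈ N} V(n) χ(n⁻¹) = |N| · #{θ | V ≅ θχ̃}` for every irreducible `V`. For `V = θ₀χ̃`
the left side is `|N|`, because `χ` is irreducible, so `θ₀` is the only such `θ`: this is
injectivity. The same identity says that `V` lies over `χ` exactly when `V` is some `θχ̃`.
-/

open CategoryTheory

universe u

noncomputable section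

namespace FDRep

variable {k G : Type u} [Field k] [Group G]

def twistRep (θ : G →* kˣ) (V : FDRep k G) : Representation k G V where
  toFun g := (θ g : k) • V.ρ g
  map_one' := by simp
  map_mul' g h := by simp only [map_mul, Units.val_mul, smul_mul_smul_comm]

def twist (θ : G →* kˣ) : FDRep k G ⥤ FDRep k G where
  obj V := FDRep.of (twistRep θ V)
  map {V W} f :=
    { hom := f.hom
      comm g := by
        ext x
        show f.hom.hom.hom ((θ g : k) • V.ρ g x) = (θ g : k) • W.ρ g (f.hom.hom.hom x)
        rw [map_smul]
        exact congrArg ((θ g : k) • ·) (congrArg (fun t => t.hom.hom x) (f.comm g)) }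

@[simp] theorem character_twist (θ : G →* kˣ) (V : FDRep k G) (g : G) :
    ((twist θ).obj V).character g = θ g * V.character g :=
  map_smul (LinearMap.trace k V) _ (V.ρ g)

def twistCompTwistIso {θ η : G →* kˣ} (h : η * θ = 1) : twist θ ⋙ twist η ≅ 𝟭 (FDRep k G) :=
  NatIso.ofComponents (fun V => Action.mkIso (Iso.refl _) fun g => by
    ext x
    show (η g : k) • (θ g : k) • V.ρ g x = V.ρ g x
    rw [smul_smul, ← Units.val_mul, ← MonoidHom.mul_apply, h, MonoidHom.one_apply, Units.val_one,
      one_smul]) fun f => by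
      ext; rfl

def twistEquiv (θ : G →* kˣ) : FDRep k G ≌ FDRep k G :=
  CategoryTheory.Equivalence.mk (twist θ) (twist θ⁻¹) (twistCompTwistIso (inv_mul_cancel θ)).symm
    (twistCompTwistIso (mul_inv_cancel θ))

instance simple_twist_obj (θ : G →* kˣ) (V : FDRep k G) [Simple V] : Simple ((twist θ).obj V) :=
  simple_obj (twistEquiv θ).functor V

variable [IsAlgClosed k] [Fintype G] [Invertible (Nat.card G : k)]

open scoped Classical in
theorem sum_character_mul_character_inv (V W : FDRep k G) [Simple V] [Simple W] :
    ∑ g : G, V.character g * W.character g⁻¹ =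
      if Nonempty (V ≅ W) then (Nat.card G : k) else 0 := by
  have h := char_orthonormal V W
  rw [inv_mul_eq_iff_eq_mul₀ (Invertible.ne_zero _)] at h
  rw [h]
  split_ifs <;> simp

theorem sum_character_mul_character_inv_self (V : FDRep k G) [Simple V] :
    ∑ g : G, V.character g * V.character g⁻¹ = Nat.card G := by
  classical
  rw [sum_character_mul_character_inv, if_pos ⟨Iso.refl V⟩]

theorem nonempty_iso_of_character_eq {V W : FDRep k G} [Simple V] [Simple W]
    (h : V.character = W.character) : Nonempty (V ≅ W) := by
  classical
  by_contra hVW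
  have := sum_character_mul_character_inv V W
  rw [if_neg hVW, ← h, sum_character_mul_character_inv_self] at this
  exact Invertible.ne_zero _ this

end FDRep

namespace CommGroup

variable {Q R : Type*} [CommGroup Q] [Finite Q] [CommRing R] [IsDomain R]
  [HasEnoughRootsOfUnity R (Monoid.exponent Q)]

open scoped Classical in
theorem sum_monoidHom_units_apply [Fintype (Q →* Rˣ)] (q : Q) :
    ∑ ψ : Q →* Rˣ, (ψ q : R) = if q = 1 then (Nat.card Q : R) else 0 := by
  by_cases hq : q = 1
  · simp [hq, ← Nat.card_eq_fintype_card, card_monoidHom_of_hasEnoughRootsOfUnity]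
  · rw [if_neg hq]
    obtain ⟨φ, hφ⟩ := exists_apply_ne_one_of_hasEnoughRootsOfUnity Q R hq
    refine sum_hom_units_eq_zero ((Units.coeHom R).comp (MonoidHom.eval q)) fun h => hφ ?_
    exact Units.ext (DFunLike.congr_fun h φ)

end CommGroup

namespace QuotientGroup

variable {G M : Type*} [Group G] [Monoid M] (N : Subgroup G) [N.Normal]

def liftUnitsEquiv : {θ : G →* M // ∀ n ∈ N, θ n = 1} ≃ (G ⧸ N →* Mˣ) where
  toFun θ := (lift N θ.1 θ.2).toHomUnits
  invFun ψ := ⟨(Units.coeHom M).comp (ψ.comp (mk' N)), fun n hn => by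
    simp [(eq_one_iff n).mpr hn]⟩
  left_inv θ := rfl
  right_inv ψ := MonoidHom.ext fun q => induction_on q fun g => Units.ext rfl

@[simp] theorem liftUnitsEquiv_apply_mk (θ : {θ : G →* M // ∀ n ∈ N, θ n = 1}) (g : G) :
    (liftUnitsEquiv N θ (g : G ⧸ N) : M) = θ.1 g := rfl

end QuotientGroup

section Gallagher

variable {k : Type} [Field k] {G : Type} [Group G] {N : Subgroup G} [N.Normal]

abbrev twistByQuotient (χext : FDRep k G) (ψ : G ⧸ N →* kˣ) : FDRep k G :=
  (FDRep.twist (ψ.comp (QuotientGroup.mk' N))).obj χext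

theorem character_twistByQuotient (χext : FDRep k G) (ψ : G ⧸ N →* kˣ) (g : G) :
    (twistByQuotient χext ψ).character g = ψ g * χext.character g :=
  FDRep.character_twist _ χext g

variable [IsAlgClosed k] [CharZero k] [Fintype G]

open scoped Classical in
theorem sum_quotient_dual_apply (hab : ∀ a b : G ⧸ N, a * b = b * a)
    [Fintype (G ⧸ N →* kˣ)] (g : G) :
    ∑ ψ : G ⧸ N →* kˣ, (ψ g : k) = if g ∈ N then (Nat.card (G ⧸ N) : k) else 0 := by
  let _ : CommGroup (G ⧸ N) := { mul_comm := hab }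
  simp only [CommGroup.sum_monoidHom_units_apply, QuotientGroup.eq_one_iff]

open scoped Classical in
theorem sum_character_twistByQuotient (hab : ∀ a b : G ⧸ N, a * b = b * a)
    [Fintype (G ⧸ N →* kˣ)] (χext : FDRep k G) (g : G) :
    ∑ ψ : G ⧸ N →* kˣ, (twistByQuotient χext ψ).character g =
      Nat.card (G ⧸ N) * if g ∈ N then χext.character g else 0 := by
  simp_rw [character_twistByQuotient, ← Finset.sum_mul, sum_quotient_dual_apply hab, ite_mul,
    zero_mul, mul_ite, mul_zero]

theorem card_quotient_dual (hab : ∀ a b : G ⧸ N, a * b = b * a) :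
    Nat.card (G ⧸ N →* kˣ) = Nat.card (G ⧸ N) :=
  let _ : CommGroup (G ⧸ N) := { mul_comm := hab }
  CommGroup.card_monoidHom_of_hasEnoughRootsOfUnity (G ⧸ N) k

theorem sum_restrict_mul_inv_eq_card_mul_card_twists (hab : ∀ a b : G ⧸ N, a * b = b * a)
    [Fintype N] (χ : FDRep k N) (χext : FDRep k G) [Simple χext]
    (hext : ∀ n : N, χext.character n = χ.character n) (V : FDRep k G) [Simple V] :
    ∑ n : N, V.character n * χ.character n⁻¹ =
      Nat.card N * Nat.card {ψ : G ⧸ N →* kˣ // Nonempty (V ≅ twistByQuotient χext ψ)} := by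
  classical
  let _ : Fintype (G ⧸ N →* kˣ) := Fintype.ofFinite _
  let _ : Invertible (Nat.card G : k) := invertibleOfNonzero (Nat.cast_ne_zero.mpr Nat.card_pos.ne')
  have hG : (Nat.card G : k) = Nat.card (G ⧸ N) * Nat.card N := by
    rw [N.card_eq_card_quotient_mul_card_subgroup, Nat.cast_mul]
  have hrestrict : ∑ g : G, V.character g * (if g ∈ N then χext.character g⁻¹ else 0) =
      ∑ n : N, V.character n * χ.character n⁻¹ := by
    simp_rw [mul_ite, mul_zero]
    rw [← Finset.sum_filter]
    exact (Finset.sum_subtype (F := ‹Fintype N›) _ (by simp) _).trans (by simp [← hext])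
  have hinduced :
      ∑ ψ : G ⧸ N →* kˣ, ∑ g : G, V.character g * (twistByQuotient χext ψ).character g⁻¹ =
        Nat.card (G ⧸ N) * ∑ n : N, V.character n * χ.character n⁻¹ := by
    rw [Finset.sum_comm]
    simp_rw [← Finset.mul_sum, sum_character_twistByQuotient hab, inv_mem_iff,
      mul_left_comm _ (Nat.card (G ⧸ N) : k), ← Finset.mul_sum, hrestrict]
  have horth :
      ∑ ψ : G ⧸ N →* kˣ, ∑ g : G, V.character g * (twistByQuotient χext ψ).character g⁻¹ =
        Nat.card G * Nat.card {ψ : G ⧸ N →* kˣ // Nonempty (V ≅ twistByQuotient χext ψ)} := by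
    simp_rw [FDRep.sum_character_mul_character_inv, Finset.sum_ite, Finset.sum_const_zero,
      add_zero, Finset.sum_const, nsmul_eq_mul, Nat.card_eq_fintype_card, Fintype.card_subtype,
      mul_comm]
  apply mul_left_cancel₀ (Nat.cast_ne_zero.mpr Nat.card_pos.ne' : (Nat.card (G ⧸ N) : k) ≠ 0)
  rw [← hinduced, horth, hG, mul_assoc]

theorem sum_restrict_mul_inv_ne_zero_iff (hab : ∀ a b : G ⧸ N, a * b = b * a)
    [Fintype N] (χ : FDRep k N) (χext : FDRep k G) [Simple χext]
    (hext : ∀ n : N, χext.character n = χ.character n) (V : FDRep k G) [Simple V] :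
    ∑ n : N, V.character n * χ.character n⁻¹ ≠ 0 ↔
      ∃ ψ : G ⧸ N →* kˣ, Nonempty (V ≅ twistByQuotient χext ψ) := by
  rw [sum_restrict_mul_inv_eq_card_mul_card_twists hab χ χext hext, mul_ne_zero_iff,
    Nat.cast_ne_zero, Nat.cast_ne_zero, and_iff_right Nat.card_pos.ne', ← Nat.pos_iff_ne_zero,
    Finite.card_pos_iff, nonempty_subtype]

theorem card_iso_twistByQuotient_eq_one (hab : ∀ a b : G ⧸ N, a * b = b * a)
    (χ : FDRep k N) [Simple χ] (χext : FDRep k G) [Simple χext]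
    (hext : ∀ n : N, χext.character n = χ.character n) (ψ₀ : G ⧸ N →* kˣ) :
    Nat.card {ψ : G ⧸ N →* kˣ //
      Nonempty (twistByQuotient χext ψ₀ ≅ twistByQuotient χext ψ)} = 1 := by
  let _ : Fintype N := Fintype.ofFinite N
  let _ : Invertible (Nat.card N : k) := invertibleOfNonzero (Nat.cast_ne_zero.mpr Nat.card_pos.ne')
  have hres (n : N) : (twistByQuotient χext ψ₀).character n = χ.character n := by
    rw [character_twistByQuotient, (QuotientGroup.eq_one_iff _).mpr n.2, map_one, Units.val_one,
      one_mul, hext]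
  have := sum_restrict_mul_inv_eq_card_mul_card_twists hab χ χext hext (twistByQuotient χext ψ₀)
  simp_rw [hres, FDRep.sum_character_mul_character_inv_self] at this
  exact_mod_cast (mul_eq_left₀ (Nat.cast_ne_zero.mpr Nat.card_pos.ne')).mp this.symm

theorem twistByQuotient_character_injective (hab : ∀ a b : G ⧸ N, a * b = b * a)
    (χ : FDRep k N) [Simple χ] (χext : FDRep k G) [Simple χext]
    (hext : ∀ n : N, χext.character n = χ.character n) :
    Function.Injective fun ψ : G ⧸ N →* kˣ => (twistByQuotient χext ψ).character := by
  intro ψ₁ ψ₂ h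
  let _ : Invertible (Nat.card G : k) := invertibleOfNonzero (Nat.cast_ne_zero.mpr Nat.card_pos.ne')
  have hunique :=
    Nat.card_eq_one_iff_unique.mp (card_iso_twistByQuotient_eq_one hab χ χext hext ψ₁)
  exact congrArg Subtype.val <|
    hunique.1.elim ⟨ψ₁, ⟨Iso.refl _⟩⟩ ⟨ψ₂, FDRep.nonempty_iso_of_character_eq h⟩

theorem range_twistByQuotient_character (hab : ∀ a b : G ⧸ N, a * b = b * a)
    [Fintype N] (χ : FDRep k N) (χext : FDRep k G) [Simple χext]
    (hext : ∀ n : N, χext.character n = χ.character n) :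
    Set.range (fun ψ : G ⧸ N →* kˣ => (twistByQuotient χext ψ).character) =
      {f : G → k | ∃ V : FDRep k G, Simple V ∧ f = V.character ∧
        ∑ n : N, V.character n * χ.character n⁻¹ ≠ 0} := by
  ext f
  constructor
  · rintro ⟨ψ, rfl⟩
    exact ⟨_, inferInstance, rfl,
      (sum_restrict_mul_inv_ne_zero_iff hab χ χext hext _).mpr ⟨ψ, ⟨Iso.refl _⟩⟩⟩
  · rintro ⟨V, hV, rfl, hne⟩
    obtain ⟨ψ, ⟨i⟩⟩ := (sum_restrict_mul_inv_ne_zero_iff hab χ χext hext V).mp hne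
    exact ⟨ψ, (FDRep.char_iso i).symm⟩

end Gallagher

end

theorem stmt_11_general {G : Type} [Group G] [Fintype G] (N : Subgroup G) [N.Normal]
    [Fintype ↥N]
    (hab : ∀ a b : G ⧸ N, a * b = b * a)
    (χ : FDRep ℂ ↥N) [Simple χ]
    (χext : FDRep ℂ G) [Simple χext]
    (hext : ∀ n : N, χext.character ↑n = χ.character n) :
    Function.Injective
        (fun θ : {θ : G →* ℂ // ∀ n ∈ N, θ n = 1} =>
          (fun g => θ.1 g * χext.character g : G → ℂ)) ∧
      Set.range (fun θ : {θ : G →* ℂ // ∀ n ∈ N, θ n = 1} =>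
          (fun g => θ.1 g * χext.character g : G → ℂ)) =
        {f : G → ℂ | ∃ V : FDRep ℂ G, Simple V ∧ f = V.character ∧
          ∑ n : N, V.character ↑n * χ.character n⁻¹ ≠ 0} ∧
      {f : G → ℂ | ∃ V : FDRep ℂ G, Simple V ∧ f = V.character ∧
          ∑ n : N, V.character ↑n * χ.character n⁻¹ ≠ 0}.ncard =
        Nat.card (G ⧸ N) := by
  have hinj := twistByQuotient_character_injective hab χ χext hext
  have hrange := range_twistByQuotient_character hab χ χext hext
  have hfactor : (fun θ : {θ : G →* ℂ // ∀ n ∈ N, θ n = 1} => fun g => θ.1 g * χext.character g) =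
      (fun ψ => (twistByQuotient χext ψ).character) ∘ QuotientGroup.liftUnitsEquiv N := by
    funext θ g
    simp
  rw [hfactor, (QuotientGroup.liftUnitsEquiv N).surjective.range_comp, hrange]
  refine ⟨hinj.comp (Equiv.injective _), rfl, ?_⟩
  rw [← hrange, Set.ncard_range_of_injective hinj, card_quotient_dual hab]

theorem stmt_11 {G : Type} [Group G] [Fintype G] (N : Subgroup G) [N.Normal]
    [Fintype ↥N]
    (hab : ∀ a b : G ⧸ N, a * b = b * a)
    (χ : FDRep ℂ ↥N) [Simple χ]
    (hinv : ∀ (g n : G) (hn : n ∈ N) (hgn : g * n * g⁻¹ ∈ N),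
      χ.character ⟨g * n * g⁻¹, hgn⟩ = χ.character ⟨n, hn⟩)
    (χext : FDRep ℂ G) [Simple χext]
    (hext : ∀ n : N, χext.character ↑n = χ.character n) :
    Function.Injective
        (fun θ : {θ : G →* ℂ // ∀ n ∈ N, θ n = 1} =>
          (fun g => θ.1 g * χext.character g : G → ℂ)) ∧
      Set.range (fun θ : {θ : G →* ℂ // ∀ n ∈ N, θ n = 1} =>
          (fun g => θ.1 g * χext.character g : G → ℂ)) =
        {f : G → ℂ | ∃ V : FDRep ℂ G, Simple V ∧ f = V.character ∧
          ∑ n : N, V.character ↑n * χ.character n⁻¹ ≠ 0} ∧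
      {f : G → ℂ | ∃ V : FDRep ℂ G, Simple V ∧ f = V.character ∧
          ∑ n : N, V.character ↑n * χ.character n⁻¹ ≠ 0}.ncard =
        Nat.card (G ⧸ N) :=
  stmt_11_general N hab χ χext hext
end
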